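/- arXiv:2210.08241 — 6 statements merged into one kernel-verified Lean document; each statement's English description precedes it below -/
import Mathlib

section
/- For tubal matrices A and B of compatible sizes, the slice transpose satisfies (A*B)^{ST} = B^{ST} * A^{ST}, where A^{ST} is defined by transposing each frontal slice of A (without reversing slice order). -/
open scoped Matrix Kronecker BigOperators
open MeasureTheory
open scoped ProbabilityTheory

/-- The t-product of two tubal matrices (third-order tensors given by their
frontal slices): `(A*B)_k = ∑_{k'} A_{k-k'} B_{k'}` (circular convolution of slices),
equivalently `A*B = fold(bcirc(A) · unfold(B))`. -/
def tProd {α β γ : Type*} [Fintype β] {l : ℕ}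
    (A : Fin l → Matrix α β ℝ) (B : Fin l → Matrix β γ ℝ) :
    Fin l → Matrix α γ ℝ :=
  fun k => ∑ k' : Fin l, A (k - k') * B k'

/-- The block-circulant matrix of a tubal matrix: the `(a,b)` block is `A_{a-b mod l}`. -/
def bcirc {α β : Type*} {l : ℕ} (A : Fin l → Matrix α β ℝ) :
    Matrix (α × Fin l) (β × Fin l) ℝ :=
  Matrix.of fun p q => A (p.2 - q.2) p.1 q.1

/-- Squared Frobenius norm of a tubal matrix (third-order tensor). -/
def frobSq {α β : Type*} [Fintype α] [Fintype β] {l : ℕ}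
    (A : Fin l → Matrix α β ℝ) : ℝ :=
  ∑ k, ∑ i, ∑ j, (A k i j) ^ 2

/-- Squared Frobenius norm of a real matrix. -/
def matFrobSq {α β : Type*} [Fintype α] [Fintype β] (M : Matrix α β ℝ) : ℝ :=
  ∑ i, ∑ j, (M i j) ^ 2

/-- Tensor transpose under the t-product: transpose each frontal slice and reverse
the order of slices 2 through l, i.e. `(Aᵀ)_k = (A_{-k})ᵀ`. -/
def ttr {α β : Type*} {l : ℕ} (A : Fin l → Matrix α β ℝ) :
    Fin l → Matrix β α ℝ :=
  fun k => (A (-k))ᵀ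

/-- Slice transpose: transpose each frontal slice (no reversal). -/
def sliceT {α β : Type*} {l : ℕ} (A : Fin l → Matrix α β ℝ) :
    Fin l → Matrix β α ℝ :=
  fun k => (A k)ᵀ

/-- Reverse: reverse the order of frontal slices 2 through l. -/
def trev {α β : Type*} {l : ℕ} (A : Fin l → Matrix α β ℝ) :
    Fin l → Matrix α β ℝ :=
  fun k => A (-k)

/-- t-Kronecker product of tubal matrices: `(A ⊗_t B)_k = ∑_{k'} A_{k-k'} ⊗ B_{k'}`,
the block tubal matrix whose `(i,j)` block is `A_{(i,j,:)} * B`. -/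
def tkron {α β γ δ : Type*} {l : ℕ}
    (A : Fin l → Matrix α β ℝ) (B : Fin l → Matrix γ δ ℝ) :
    Fin l → Matrix (α × γ) (β × δ) ℝ :=
  fun k => ∑ k' : Fin l, (A (k - k')) ⊗ₖ (B k')

/-- The identity tubal matrix: first frontal slice is the identity, others zero. -/
def tId (α : Type*) [DecidableEq α] [Fintype α] (l : ℕ) [NeZero l] :
    Fin l → Matrix α α ℝ :=
  fun k => if k = 0 then (1 : Matrix α α ℝ) else 0

/-- t-vectorization: stack the lateral slices of a tubal matrix vertically. -/
def vecT {α β : Type*} {l : ℕ} (B : Fin l → Matrix α β ℝ) :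
    Fin l → Matrix (β × α) (Fin 1) ℝ :=
  fun k => Matrix.of fun p _ => B k p.2 p.1

/-- Discrete Fourier transform along the third dimension:
`Â_k = ∑_j exp(-2πi·jk/l) A_j`. -/
noncomputable def dft {α β : Type*} {l : ℕ} (A : Fin l → Matrix α β ℝ) :
    Fin l → Matrix α β ℂ :=
  fun k => ∑ j : Fin l,
    Complex.exp (-(2 * (Real.pi : ℂ) * Complex.I * (j.1 : ℂ) * (k.1 : ℂ)) / (l : ℂ)) •
      (A j).map Complex.ofReal

/-- Squared Frobenius norm of a complex matrix. -/
def matFrobSqC {α β : Type*} [Fintype α] [Fintype β] (M : Matrix α β ℂ) : ℝ :=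
  ∑ i, ∑ j, Complex.normSq (M i j)

theorem sliceT_tprod {m n r l : ℕ}
    (A : Fin l → Matrix (Fin m) (Fin n) ℝ) (B : Fin l → Matrix (Fin n) (Fin r) ℝ) :
    sliceT (tProd A B) = tProd (sliceT B) (sliceT A) := by
  cases l with
  | zero => funext k; exact absurd k.2 (by simp)
  | succ n =>
    funext k
    simp only [sliceT, tProd, Matrix.transpose_sum, Matrix.transpose_mul]
    exact Fintype.sum_equiv (Equiv.subLeft k) _ _ (fun k' => by simp)
end

section
/- For tubal matrices A, B, C, D of multiplicable dimensions, the mixed-product property holds for the t-Kronecker product: (A*B) ⊗_t (C*D) = (A ⊗_t C) * (B ⊗_t D). -/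
open scoped Matrix Kronecker BigOperators
open MeasureTheory
open scoped ProbabilityTheory

lemma sum_kron' {ι α β γ δ : Type*} (s : Finset ι) (f : ι → Matrix α β ℝ) (M : Matrix γ δ ℝ) :
    (∑ i ∈ s, f i) ⊗ₖ M = ∑ i ∈ s, (f i) ⊗ₖ M := by
  ext ⟨i, j⟩ ⟨a, b⟩
  simp [Matrix.kroneckerMap_apply, Matrix.sum_apply, Finset.sum_mul]

lemma kron_sum' {ι α β γ δ : Type*} (s : Finset ι) (M : Matrix α β ℝ) (f : ι → Matrix γ δ ℝ) :
    M ⊗ₖ (∑ i ∈ s, f i) = ∑ i ∈ s, M ⊗ₖ (f i) := by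
  ext ⟨i, j⟩ ⟨a, b⟩
  simp [Matrix.kroneckerMap_apply, Matrix.sum_apply, Finset.mul_sum]

lemma flat3 {M : Type*} [AddCommMonoid M] {l : ℕ} (F : Fin l → Fin l → Fin l → M) :
    ∑ x : Fin l × Fin l × Fin l, F x.1 x.2.1 x.2.2 = ∑ a, ∑ b, ∑ c, F a b c := by
  rw [Fintype.sum_prod_type]
  simp_rw [Fintype.sum_prod_type]

theorem tkron_mixed_product {m n p r s q l : ℕ}
    (A : Fin l → Matrix (Fin m) (Fin n) ℝ) (B : Fin l → Matrix (Fin n) (Fin p) ℝ)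
    (C : Fin l → Matrix (Fin r) (Fin s) ℝ) (D : Fin l → Matrix (Fin s) (Fin q) ℝ) :
    tkron (tProd A B) (tProd C D) = tProd (tkron A C) (tkron B D) := by
  funext k
  rcases Nat.eq_zero_or_pos l with hl | hl
  · subst hl; exact k.elim0
  haveI : NeZero l := ⟨hl.ne'⟩
  unfold tkron tProd
  simp only [sum_kron', kron_sum', Matrix.mul_kronecker_mul, Matrix.sum_mul, Matrix.mul_sum]
  rw [← flat3, ← flat3]
  refine (Fintype.sum_equiv
    { toFun := fun x => (x.2.2 + x.2.1, x.2.1, x.1 - x.2.1)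
      invFun := fun y => (y.2.2 + y.2.1, y.2.1, y.1 - y.2.1)
      left_inv := by rintro ⟨x, x1, x2⟩; simp
      right_inv := by rintro ⟨y, y1, y2⟩; simp } _ _ ?_).symm
  rintro ⟨x, x1, x2⟩
  have h : k - (x2 + x1) - (x - x1) = k - x - x2 := by abel
  simp [h, add_sub_cancel_right]
end

section
/- For tubal matrices A, B, C of compatible sizes, vec_t(A*B*C) = (C^{ST} ⊗_t A) * vec_t(B), where vec_t stacks the lateral slices of a tubal matrix vertically. -/
open scoped Matrix Kronecker BigOperators
open MeasureTheory
open scoped ProbabilityTheory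

theorem vecT_tprod_tprod {m r s n l : ℕ}
    (A : Fin l → Matrix (Fin m) (Fin r) ℝ) (B : Fin l → Matrix (Fin r) (Fin s) ℝ)
    (C : Fin l → Matrix (Fin s) (Fin n) ℝ) :
    vecT (tProd (tProd A B) C) = tProd (tkron (sliceT C) A) (vecT B) := by
  funext k
  haveI : NeZero l := ⟨fun h => (h ▸ k).elim0⟩
  ext p o
  simp only [vecT, tProd, tkron, sliceT, Matrix.of_apply, Matrix.sum_apply,
    Matrix.mul_apply, Matrix.kroneckerMap_apply, Matrix.transpose_apply,
    Finset.sum_mul, Finset.mul_sum, Fintype.sum_prod_type]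
  have key : ∀ (g : Fin l → Fin l → ℝ),
      (∑ k' : Fin l, ∑ k'' : Fin l, g k' k'') = ∑ a : Fin l, ∑ b : Fin l, g (k - a - b) a := by
    intro g
    rw [← Finset.sum_product', ← Finset.sum_product']
    refine Fintype.sum_equiv ⟨fun x => (x.2, k - x.1 - x.2), fun y => (k - y.1 - y.2, y.1),
      ?_, ?_⟩ _ _ ?_
    · intro x
      have h1 : k - x.2 - (k - x.1 - x.2) = x.1 := by abel
      simp [h1]
    · intro y
      have h1 : k - (k - y.1 - y.2) - y.1 = y.2 := by abel
      simp [h1]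
    · intro x
      simp
  calc (∑ k' : Fin l, ∑ q : Fin s, ∑ k'' : Fin l, ∑ r' : Fin r,
          A (k - k' - k'') p.2 r' * B k'' r' q * C k' q p.1)
      = ∑ k' : Fin l, ∑ k'' : Fin l, ∑ q : Fin s, ∑ r' : Fin r,
          A (k - k' - k'') p.2 r' * B k'' r' q * C k' q p.1 := by
        refine Finset.sum_congr rfl fun k' _ => Finset.sum_comm
    _ = ∑ a : Fin l, ∑ b : Fin l, ∑ q : Fin s, ∑ r' : Fin r,
          A (k - (k - a - b) - a) p.2 r' * B a r' q * C (k - a - b) q p.1 :=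
        key _
    _ = ∑ a : Fin l, ∑ q : Fin s, ∑ r' : Fin r, ∑ b : Fin l,
          C (k - a - b) q p.1 * A b p.2 r' * B a r' q := by
        refine Finset.sum_congr rfl fun a _ => ?_
        rw [Finset.sum_comm]
        refine Finset.sum_congr rfl fun q _ => ?_
        rw [Finset.sum_comm]
        refine Finset.sum_congr rfl fun r' _ => Finset.sum_congr rfl fun b _ => ?_
        have h1 : k - (k - a - b) - a = b := by abel
        rw [h1]; ring
end

section
/- If tubal matrices A and B are orthogonal projectors under the t-product, then A ⊗_t B is also an orthogonal projector under the t-product. -/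
open scoped Matrix Kronecker BigOperators
open MeasureTheory
open scoped ProbabilityTheory

/-! The t-Kronecker product satisfies the mixed-product rule
`(A ⊗ₜ B) * (C ⊗ₜ D) = (A * C) ⊗ₜ (B * D)` and commutes with the tensor transpose, both because
slicewise `⊗ₖ` does and because both t-operations are circular convolutions over `Fin l`. The
conditions `P * P = P` and `Pᵀ = P` on `A` and `B` therefore transfer to `A ⊗ₜ B`. -/

open Matrix

namespace Matrix

variable {ι R l m n p : Type*} [Fintype ι] [NonUnitalNonAssocSemiring R]

theorem sum_kronecker (U : ι → Matrix l m R) (V : Matrix n p R) :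
    (∑ i, U i) ⊗ₖ V = ∑ i, U i ⊗ₖ V := by
  ext
  simp [sum_apply, Finset.sum_mul]

theorem kronecker_sum (U : Matrix l m R) (V : ι → Matrix n p R) :
    U ⊗ₖ (∑ i, V i) = ∑ i, U ⊗ₖ V i := by
  ext
  simp [sum_apply, Finset.mul_sum]

end Matrix

def Fin.convolutionTripleEquiv (l : ℕ) [NeZero l] :
    (Fin l × Fin l × Fin l) ≃ (Fin l × Fin l × Fin l) where
  toFun p := (p.2.1 + p.2.2, p.2.1, p.1 - p.2.1)
  invFun q := (q.2.2 + q.2.1, q.2.1, q.1 - q.2.1)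
  left_inv p := by obtain ⟨j, a, b⟩ := p; simp
  right_inv q := by obtain ⟨s, u, t⟩ := q; simp

section TubalKronecker

variable {l : ℕ} {α β γ α' β' γ' : Type*}

theorem tProd_tkron [Fintype β] [Fintype β']
    (A : Fin l → Matrix α β ℝ) (C : Fin l → Matrix β γ ℝ)
    (B : Fin l → Matrix α' β' ℝ) (D : Fin l → Matrix β' γ' ℝ) :
    tProd (tkron A B) (tkron C D) = tkron (tProd A C) (tProd B D) := by
  obtain _ | l := l
  · exact Subsingleton.elim _ _
  funext k
  simp only [tProd, tkron, Matrix.sum_mul, Matrix.mul_sum, sum_kronecker, kronecker_sum,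
    mul_kronecker_mul, ← Fintype.sum_prod_type']
  refine Fintype.sum_equiv (Fin.convolutionTripleEquiv (l + 1)) _ _ ?_
  rintro ⟨j, a, b⟩
  simp only [Fin.convolutionTripleEquiv, Equiv.coe_fn_mk]
  rw [show k - (a + b) - (j - a) = k - j - b by abel, add_sub_cancel_left]

theorem ttr_tkron (A : Fin l → Matrix α β ℝ) (B : Fin l → Matrix α' β' ℝ) :
    ttr (tkron A B) = tkron (ttr A) (ttr B) := by
  obtain _ | l := l
  · exact Subsingleton.elim _ _
  funext k
  simp only [ttr, tkron, transpose_sum, ← kroneckerMap_transpose]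
  refine Fintype.sum_equiv (Equiv.neg _) _ _ fun k' => ?_
  rw [Equiv.neg_apply, neg_neg, show -(k - -k') = -k - k' by abel]

end TubalKronecker

theorem tkron_orthProjector {m n l : ℕ}
    (A : Fin l → Matrix (Fin m) (Fin m) ℝ) (B : Fin l → Matrix (Fin n) (Fin n) ℝ)
    (hA : tProd A A = A ∧ ttr A = A) (hB : tProd B B = B ∧ ttr B = B) :
    tProd (tkron A B) (tkron A B) = tkron A B ∧ ttr (tkron A B) = tkron A B := by
  rw [tProd_tkron, ttr_tkron, hA.1, hA.2, hB.1, hB.2]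
  exact ⟨rfl, rfl⟩
end

section
/- For tubal matrices A ∈ ℝ^{m₁×n₁×l} and B ∈ ℝ^{m₂×n₂×l}, the Frobenius norm of their t-Kronecker product satisfies ‖A ⊗_t B‖_F² = (1/l) Σ_{k=1}^{l} ‖Â_(k)‖_F² ‖B̂_(k)‖_F², where Â and B̂ denote the discrete Fourier transforms of A and B along the third dimension. -/
/-!
Parseval's identity for the length-`l` DFT gives `l · ‖T‖_F² = ∑_k ‖T̂_(k)‖_F²` for every tubal
matrix `T`. The t-Kronecker product is a circular convolution along the tubes, which the DFT turns
into a slicewise product: the `k`-th slice of the transform of `A ⊗_t B` is `Â_(k) ⊗ B̂_(k)`,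
and the Frobenius norm is multiplicative on Kronecker products.
-/

open scoped Matrix Kronecker BigOperators
open MeasureTheory
open scoped ProbabilityTheory

section

open Complex ComplexConjugate

noncomputable def dftKer (l : ℕ) (j k : Fin l) : ℂ :=
  exp (-(2 * (Real.pi : ℂ) * I * (j.1 : ℂ) * (k.1 : ℂ)) / (l : ℂ))

noncomputable def dftRoot (l : ℕ) : ℂ :=
  (exp (2 * Real.pi * I / l))⁻¹

lemma isPrimitiveRoot_dftRoot (l : ℕ) [NeZero l] : IsPrimitiveRoot (dftRoot l) l :=
  (isPrimitiveRoot_exp l (NeZero.ne l)).inv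

lemma dftKer_eq_pow (l : ℕ) (j k : Fin l) : dftKer l j k = dftRoot l ^ (j.1 * k.1) := by
  rw [dftRoot, ← exp_neg, ← exp_nat_mul, dftKer]
  congr 1
  push_cast
  ring

lemma dftKer_ne_zero (l : ℕ) (j k : Fin l) : dftKer l j k ≠ 0 :=
  exp_ne_zero _

lemma dft_apply {α β : Type*} {l : ℕ} (A : Fin l → Matrix α β ℝ) (k : Fin l) (i : α) (j : β) :
    dft A k i j = ∑ t, dftKer l t k * A t i j := by
  simp [dft, dftKer, Matrix.sum_apply, mul_comm]

section

variable {l : ℕ} [NeZero l]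

lemma dftKer_add_left (j j' k : Fin l) :
    dftKer l (j + j') k = dftKer l j k * dftKer l j' k := by
  have hmod (n : ℕ) : dftRoot l ^ (n % l) = dftRoot l ^ n := by
    simpa only [← (isPrimitiveRoot_dftRoot l).eq_orderOf] using pow_mod_orderOf (dftRoot l) n
  rw [dftKer_eq_pow, dftKer_eq_pow, dftKer_eq_pow, ← pow_add, ← add_mul, Fin.val_add,
    ← hmod, Nat.mod_mul_mod, hmod]

lemma conj_dftKer (j k : Fin l) : conj (dftKer l j k) = (dftKer l j k)⁻¹ := by
  refine (inv_eq_conj ?_).symm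
  rw [dftKer_eq_pow, norm_pow, (isPrimitiveRoot_dftRoot l).norm'_eq_one (NeZero.ne l), one_pow]

lemma sum_dftKer (d : Fin l) : ∑ k, dftKer l d k = if d = 0 then (l : ℂ) else 0 := by
  set η := dftRoot l ^ d.1
  have hsum : ∑ k, dftKer l d k = ∑ k ∈ Finset.range l, η ^ k := by
    simp only [dftKer_eq_pow, pow_mul, η]
    exact Fin.sum_univ_eq_sum_range (η ^ ·) l
  have hζ := isPrimitiveRoot_dftRoot l
  rw [hsum]
  split_ifs with hd
  · simp [η, hd]
  · have hη : η ≠ 1 := fun h ↦ hd <| Fin.ext <|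
      Nat.eq_zero_of_dvd_of_lt ((hζ.pow_eq_one_iff_dvd _).1 h) d.2
    have hηl : η ^ l = 1 := by rw [← pow_mul, mul_comm, pow_mul, hζ.pow_eq_one, one_pow]
    rw [geom_sum_eq hη, hηl, sub_self, zero_div]

lemma sum_dftKer_mul_conj (j j' : Fin l) :
    ∑ k, dftKer l j k * conj (dftKer l j' k) = if j = j' then (l : ℂ) else 0 := by
  have h (k : Fin l) : dftKer l j k * conj (dftKer l j' k) = dftKer l (j - j') k := by
    rw [conj_dftKer, ← div_eq_mul_inv, div_eq_iff (dftKer_ne_zero l j' k), ← dftKer_add_left,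
      sub_add_cancel]
  simp only [h, sum_dftKer, sub_eq_zero]

lemma sum_normSq_dftKer_sum (c : Fin l → ℂ) :
    ∑ k, normSq (∑ j, dftKer l j k * c j) = l * ∑ j, normSq (c j) := by
  apply ofReal_injective
  push_cast
  simp only [← mul_conj, map_sum, map_mul, Finset.sum_mul_sum]
  calc ∑ k, ∑ j, ∑ j', dftKer l j k * c j * (conj (dftKer l j' k) * conj (c j'))
      = ∑ j, ∑ j', c j * conj (c j') * ∑ k, dftKer l j k * conj (dftKer l j' k) := by
        rw [Finset.sum_comm]
        refine Finset.sum_congr rfl fun j _ ↦ ?_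
        rw [Finset.sum_comm]
        simp only [Finset.mul_sum]
        exact Finset.sum_congr rfl fun _ _ ↦ Finset.sum_congr rfl fun _ _ ↦ by ring
    _ = l * ∑ j, c j * conj (c j) := by
        simp [sum_dftKer_mul_conj, Finset.mul_sum, mul_comm]

lemma sum_matFrobSqC_dft {α β : Type*} [Fintype α] [Fintype β]
    (A : Fin l → Matrix α β ℝ) : ∑ k, matFrobSqC (dft A k) = l * frobSq A := by
  calc ∑ k, matFrobSqC (dft A k)
      = ∑ i, ∑ j, ∑ k, normSq (∑ t, dftKer l t k * A t i j) := by
        simp only [matFrobSqC, dft_apply]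
        exact Finset.sum_comm_cycle.symm
    _ = ∑ i, ∑ j, (l : ℝ) * ∑ t, A t i j ^ 2 := by
        simp only [sum_normSq_dftKer_sum, normSq_ofReal, sq]
    _ = l * frobSq A := by
        simp only [frobSq, Finset.mul_sum]
        exact Finset.sum_comm_cycle

lemma dft_tkron {α β γ δ : Type*}
    (A : Fin l → Matrix α β ℝ) (B : Fin l → Matrix γ δ ℝ) (k : Fin l) :
    dft (tkron A B) k = dft A k ⊗ₖ dft B k := by
  ext ⟨i, i'⟩ ⟨j, j'⟩
  simp only [dft_apply, Matrix.kroneckerMap_apply, tkron, Matrix.sum_apply, ofReal_sum,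
    ofReal_mul, Finset.mul_sum]
  rw [Finset.sum_comm]
  refine Finset.sum_congr rfl fun t _ ↦ ?_
  rw [Finset.sum_mul, ← Equiv.sum_comp (Equiv.addRight t)]
  refine Finset.sum_congr rfl fun s _ ↦ ?_
  rw [Equiv.coe_addRight, add_sub_cancel_right, dftKer_add_left]
  ring

end

lemma matFrobSqC_kronecker {α β γ δ : Type*} [Fintype α] [Fintype β] [Fintype γ] [Fintype δ]
    (M : Matrix α β ℂ) (N : Matrix γ δ ℂ) :
    matFrobSqC (M ⊗ₖ N) = matFrobSqC M * matFrobSqC N := by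
  simp only [matFrobSqC, Fintype.sum_prod_type, Finset.sum_mul_sum, Matrix.kroneckerMap_apply,
    normSq_mul]

end

theorem frobSq_tkron {m₁ n₁ m₂ n₂ l : ℕ} [NeZero l]
    (A : Fin l → Matrix (Fin m₁) (Fin n₁) ℝ) (B : Fin l → Matrix (Fin m₂) (Fin n₂) ℝ) :
    frobSq (tkron A B) =
      (1 / (l : ℝ)) * ∑ k : Fin l, matFrobSqC (dft A k) * matFrobSqC (dft B k) := by
  have hl : (l : ℝ) ≠ 0 := NeZero.ne _
  calc frobSq (tkron A B) = (1 / (l : ℝ)) * ∑ k, matFrobSqC (dft (tkron A B) k) := by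
        rw [sum_matFrobSqC_dft]
        field_simp
    _ = _ := by simp only [dft_tkron, matFrobSqC_kronecker]
end

section
/- If real random matrices Z and W are orthogonal projectors with probability 1 and 𝔼[Z], 𝔼[W] are positive definite, then every eigenvalue of 𝔼[W ⊗ Z] lies in the interval (0, 1]; in particular λ_min(𝔼[W ⊗ Z]) > 0 and λ_max(𝔼[W ⊗ Z]) ≤ 1. -/
open scoped Matrix Kronecker BigOperators
open MeasureTheory
open scoped ProbabilityTheory

/-! Almost surely `W ⊗ Z` is an orthogonal projector, so `vᵀ (W ⊗ Z) v ≤ vᵀ v`; taking expectations,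
the quadratic form of `𝔼[W ⊗ Z]` is at most `vᵀ v`, which bounds eigenvalues by `1`. By independence
`𝔼[W ⊗ Z] = 𝔼[W] ⊗ 𝔼[Z]`, a Kronecker product of positive definite matrices, hence positive definite,
which makes eigenvalues positive. -/

namespace Matrix

variable {ι κ : Type*} [Fintype ι] [Fintype κ]

theorem isStarProjection_of_transpose_eq {R : Type*} [Semiring R] [Star R] [TrivialStar R]
    {P : Matrix ι ι R} (hPt : Pᵀ = P) (hPP : P * P = P) : IsStarProjection P :=
  ⟨hPP, by rw [IsSelfAdjoint, star_eq_conjTranspose, conjTranspose_eq_transpose_of_trivial, hPt]⟩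

theorem IsStarProjection.kronecker {R : Type*} [CommSemiring R] [StarRing R]
    {P : Matrix ι ι R} {Q : Matrix κ κ R} (hP : IsStarProjection P) (hQ : IsStarProjection Q) :
    IsStarProjection (P ⊗ₖ Q) := by
  rw [isStarProjection_iff'] at *
  refine ⟨?_, ?_⟩
  · rw [← mul_kronecker_mul, hP.1, hQ.1]
  · rw [star_eq_conjTranspose, conjTranspose_kronecker, ← star_eq_conjTranspose,
      ← star_eq_conjTranspose, hP.2, hQ.2]

open scoped MatrixOrder ComplexOrder in
theorem IsStarProjection.dotProduct_mulVec_le [DecidableEq ι] {𝕜 : Type*} [RCLike 𝕜]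
    {P : Matrix ι ι 𝕜} (hP : IsStarProjection P) (v : ι → 𝕜) :
    star v ⬝ᵥ P *ᵥ v ≤ star v ⬝ᵥ v := by
  have := (nonneg_iff_posSemidef.mp hP.one_sub_nonneg).dotProduct_mulVec_nonneg v
  rwa [sub_mulVec, one_mulVec, dotProduct_sub, sub_nonneg] at this

theorem PosDef.eigenvalue_mem_Ioc_of_dotProduct_mulVec_le {A : Matrix ι ι ℝ} (hA : A.PosDef)
    (hle : ∀ v, v ⬝ᵥ A *ᵥ v ≤ v ⬝ᵥ v) {c : ℝ} {v : ι → ℝ} (hv : v ≠ 0)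
    (hAv : A *ᵥ v = c • v) : c ∈ Set.Ioc 0 1 := by
  have hvv : 0 < v ⬝ᵥ v := by simpa using dotProduct_star_self_pos_iff.mpr hv
  have hform : v ⬝ᵥ A *ᵥ v = c * (v ⬝ᵥ v) := by rw [hAv, dotProduct_smul, smul_eq_mul]
  have hpos : 0 < v ⬝ᵥ A *ᵥ v := by simpa using hA.dotProduct_mulVec_pos hv
  rw [hform] at hpos
  have hle' : c * (v ⬝ᵥ v) ≤ 1 * (v ⬝ᵥ v) := by rw [one_mul, ← hform]; exact hle v
  exact ⟨pos_of_mul_pos_left hpos hvv.le, le_of_mul_le_mul_right hle' hvv⟩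

end Matrix

open Matrix

section Expectation

variable {Ω ι κ : Type*} [MeasurableSpace Ω] {μ : Measure Ω}

theorem ProbabilityTheory.IndepFun.integral_kronecker {α β : Type*}
    {A : Ω → Matrix ι κ ℝ} {B : Ω → Matrix α β ℝ}
    (hAB : IndepFun (fun ω i j => A ω i j) (fun ω i j => B ω i j) μ)
    (hA : ∀ i j, AEStronglyMeasurable (fun ω => A ω i j) μ)
    (hB : ∀ i j, AEStronglyMeasurable (fun ω => B ω i j) μ) :
    (of fun p q => ∫ ω, (A ω ⊗ₖ B ω) p q ∂μ) =
      (of fun i j => ∫ ω, A ω i j ∂μ) ⊗ₖ (of fun i j => ∫ ω, B ω i j ∂μ) := by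
  ext ⟨i, k⟩ ⟨j, l⟩
  have hind : IndepFun (fun ω => A ω i j) (fun ω => B ω k l) μ :=
    hAB.comp ((measurable_pi_apply j).comp (measurable_pi_apply i))
      ((measurable_pi_apply l).comp (measurable_pi_apply k))
  exact hind.integral_mul_eq_mul_integral (hA i j) (hB k l)

variable [Fintype ι] [Fintype κ]

theorem integrable_dotProduct_mulVec {M : Ω → Matrix ι κ ℝ}
    (hM : ∀ i j, Integrable (fun ω => M ω i j) μ) (u : ι → ℝ) (v : κ → ℝ) :
    Integrable (fun ω => u ⬝ᵥ M ω *ᵥ v) μ := by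
  simp only [dotProduct, mulVec]
  exact integrable_finsetSum _ fun i _ =>
    (integrable_finsetSum _ fun j _ => (hM i j).mul_const _).const_mul _

theorem integral_dotProduct_mulVec {M : Ω → Matrix ι κ ℝ}
    (hM : ∀ i j, Integrable (fun ω => M ω i j) μ) (u : ι → ℝ) (v : κ → ℝ) :
    ∫ ω, u ⬝ᵥ M ω *ᵥ v ∂μ = u ⬝ᵥ (of fun i j => ∫ ω, M ω i j ∂μ) *ᵥ v := by
  simp only [dotProduct, mulVec, of_apply]
  rw [integral_finsetSum _ fun i _ =>
    (integrable_finsetSum _ fun j _ => (hM i j).mul_const _).const_mul _]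
  refine Finset.sum_congr rfl fun i _ => ?_
  rw [integral_const_mul, integral_finsetSum _ fun j _ => (hM i j).mul_const _]
  simp only [integral_mul_const]

theorem dotProduct_mulVec_integral_le_of_ae_isStarProjection [IsProbabilityMeasure μ]
    {P : Ω → Matrix ι ι ℝ} (hP : ∀ᵐ ω ∂μ, IsStarProjection (P ω))
    (hPint : ∀ i j, Integrable (fun ω => P ω i j) μ) (v : ι → ℝ) :
    v ⬝ᵥ (of fun i j => ∫ ω, P ω i j ∂μ) *ᵥ v ≤ v ⬝ᵥ v := by
  classical
  rw [← integral_dotProduct_mulVec hPint]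
  calc ∫ ω, v ⬝ᵥ P ω *ᵥ v ∂μ ≤ ∫ _, v ⬝ᵥ v ∂μ :=
        integral_mono_ae (integrable_dotProduct_mulVec hPint v v) (integrable_const _) <|
          hP.mono fun ω hPω => by simpa using hPω.dotProduct_mulVec_le v
    _ = v ⬝ᵥ v := by simp

end Expectation

theorem eigenvalues_expected_kron_projectors
    {Ω : Type*} [MeasureSpace Ω] [IsProbabilityMeasure (ℙ : Measure Ω)]
    {n m : ℕ}
    (Z : Ω → Matrix (Fin n) (Fin n) ℝ) (W : Ω → Matrix (Fin m) (Fin m) ℝ)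
    (hZproj : ∀ᵐ ω, (Z ω)ᵀ = Z ω ∧ Z ω * Z ω = Z ω)
    (hWproj : ∀ᵐ ω, (W ω)ᵀ = W ω ∧ W ω * W ω = W ω)
    (hInd : ProbabilityTheory.IndepFun
        (fun ω (i j : Fin n) => Z ω i j) (fun ω (i j : Fin m) => W ω i j))
    (hZint : ∀ i j, Integrable fun ω => Z ω i j)
    (hWint : ∀ i j, Integrable fun ω => W ω i j)
    (hKint : ∀ p q, Integrable fun ω => (W ω ⊗ₖ Z ω) p q)
    (hEZ : (Matrix.of fun i j => ∫ ω, Z ω i j).PosDef)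
    (hEW : (Matrix.of fun i j => ∫ ω, W ω i j).PosDef) :
    ∀ (μ : ℝ) (v : Fin m × Fin n → ℝ), v ≠ 0 →
      (Matrix.of fun p q => ∫ ω, (W ω ⊗ₖ Z ω) p q).mulVec v = μ • v →
      0 < μ ∧ μ ≤ 1 := by
  intro μ v hv hμv
  have hKproj : ∀ᵐ ω, IsStarProjection (W ω ⊗ₖ Z ω) := by
    filter_upwards [hZproj, hWproj] with ω hZ hW
    exact (isStarProjection_of_transpose_eq hW.1 hW.2).kronecker
      (isStarProjection_of_transpose_eq hZ.1 hZ.2)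
  have hE := hInd.symm.integral_kronecker (fun i j => (hWint i j).aestronglyMeasurable)
    fun i j => (hZint i j).aestronglyMeasurable
  rw [hE] at hμv
  refine (hEW.kronecker hEZ).eigenvalue_mem_Ioc_of_dotProduct_mulVec_le (fun u => ?_) hv hμv
  rw [← hE]
  exact dotProduct_mulVec_integral_le_of_ae_isStarProjection hKproj hKint u
end
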